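/- Let W : ℝ × ℝ → ℝ be a smooth function which solves the potential Fordy–Gibbons equation W_t = W_5 − 5 W_3 W_2 − 5 W_3 W_1² − 5 W_2² W_1 + W_1⁵. Then the function v = W_1 solves the Fordy–Gibbons equation v_t = v_5 − 5 v_3 v_1 − 5 v_3 v² − 5 v_2² − 20 v_2 v_1 v − 5 v_1³ + 5 v_1 v⁴. This is the bosonic component of the paper's claim that under the potential substitution Φ = DW the trivial supersymmetric Fordy–Gibbons equation is converted into the potential Fordy–Gibbons equation. -/

import Mathlib

/-- Partial derivative with respect to the space variable (first argument). -/
noncomputable def dx (f : ℝ × ℝ → ℝ) : ℝ × ℝ → ℝ :=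
  fun p => deriv (fun y => f (y, p.2)) p.1

/-- Partial derivative with respect to the time variable (second argument). -/
noncomputable def dt (f : ℝ × ℝ → ℝ) : ℝ × ℝ → ℝ :=
  fun p => deriv (fun s => f (p.1, s)) p.2


lemma dx_eq {f : ℝ × ℝ → ℝ} (hf : Differentiable ℝ f) (p : ℝ × ℝ) :
    dx f p = fderiv ℝ f p ((1 : ℝ), (0 : ℝ)) := by
  have h1 : HasDerivAt (fun y : ℝ => (y, p.2)) ((1 : ℝ), (0 : ℝ)) p.1 :=
    (hasDerivAt_id p.1).prodMk (hasDerivAt_const _ _)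
  have h2 : HasDerivAt (fun y : ℝ => f (y, p.2)) (fderiv ℝ f p ((1:ℝ),(0:ℝ))) p.1 := by
    have := (hf p).hasFDerivAt.comp_hasDerivAt p.1 (by simpa using h1)
    exact this
  exact h2.deriv

lemma dt_eq {f : ℝ × ℝ → ℝ} (hf : Differentiable ℝ f) (p : ℝ × ℝ) :
    dt f p = fderiv ℝ f p ((0 : ℝ), (1 : ℝ)) := by
  have h1 : HasDerivAt (fun s : ℝ => (p.1, s)) ((0 : ℝ), (1 : ℝ)) p.2 :=
    (hasDerivAt_const _ _).prodMk (hasDerivAt_id p.2)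
  have h2 : HasDerivAt (fun s : ℝ => f (p.1, s)) (fderiv ℝ f p ((0:ℝ),(1:ℝ))) p.2 := by
    have := (hf p).hasFDerivAt.comp_hasDerivAt p.2 (by simpa using h1)
    exact this
  exact h2.deriv

lemma contDiff_dx {f : ℝ × ℝ → ℝ} (hf : ContDiff ℝ ((⊤:ℕ∞) : WithTop ℕ∞) f) :
    ContDiff ℝ ((⊤:ℕ∞) : WithTop ℕ∞) (dx f) := by
  have h : dx f = fun p => fderiv ℝ f p ((1 : ℝ), (0 : ℝ)) :=
    funext fun p => dx_eq (hf.differentiable (by simp)) p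
  rw [h]
  exact (hf.fderiv_right (by exact_mod_cast le_top)).clm_apply contDiff_const

lemma clairaut {f : ℝ × ℝ → ℝ} (hf : ContDiff ℝ ((⊤:ℕ∞) : WithTop ℕ∞) f) (p : ℝ × ℝ) :
    dt (dx f) p = dx (dt f) p := by
  have hdiff : Differentiable ℝ f := hf.differentiable (by simp)
  have hfd : ContDiff ℝ ((⊤:ℕ∞) : WithTop ℕ∞) (fderiv ℝ f) :=
    hf.fderiv_right (by exact_mod_cast le_top)
  have hdx : dx f = fun q => fderiv ℝ f q ((1 : ℝ), (0 : ℝ)) := funext fun q => dx_eq hdiff q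
  have hdt : dt f = fun q => fderiv ℝ f q ((0 : ℝ), (1 : ℝ)) := funext fun q => dt_eq hdiff q
  have hsymm : IsSymmSndFDerivAt ℝ f p :=
    hf.contDiffAt.isSymmSndFDerivAt (by
      rw [show ((2:WithTop ℕ∞)) = ((2:ℕ∞) : WithTop ℕ∞) by rfl]
      rw [minSmoothness_of_isRCLikeNormedField]; exact WithTop.coe_le_coe.mpr le_top)
  have hfderiv_diff : Differentiable ℝ (fderiv ℝ f) := hfd.differentiable (by simp)
  have key : ∀ v w : ℝ × ℝ, fderiv ℝ (fun q => fderiv ℝ f q w) p v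
      = fderiv ℝ (fderiv ℝ f) p v w := by
    intro v w
    have := fderiv_clm_apply (c := fderiv ℝ f) (u := fun _ => w) (hfderiv_diff p)
      (differentiableAt_const w)
    rw [this]; simp
  rw [hdx, hdt, dt, dx]
  have e1 : deriv (fun s => (fun q => fderiv ℝ f q ((1:ℝ),(0:ℝ))) (p.1, s)) p.2
      = fderiv ℝ (fun q => fderiv ℝ f q ((1:ℝ),(0:ℝ))) p ((0:ℝ),(1:ℝ)) :=
    dt_eq (fun q => (hfderiv_diff q).clm_apply (differentiableAt_const _)) p
  have e2 : deriv (fun y => (fun q => fderiv ℝ f q ((0:ℝ),(1:ℝ))) (y, p.2)) p.1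
      = fderiv ℝ (fun q => fderiv ℝ f q ((0:ℝ),(1:ℝ))) p ((1:ℝ),(0:ℝ)) :=
    dx_eq (fun q => (hfderiv_diff q).clm_apply (differentiableAt_const _)) p
  rw [e1, e2, key, key]
  exact hsymm _ _

/-- If $W$ solves the potential Fordy–Gibbons equation, then $v = W_1$ solves
the Fordy–Gibbons equation. -/
theorem potentialFG_to_FG (W : ℝ × ℝ → ℝ) (hW : ContDiff ℝ (⊤ : ℕ∞) W)
    (heq : ∀ p, dt W p =
      dx (dx (dx (dx (dx W)))) p - 5 * dx (dx (dx W)) p * dx (dx W) p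
        - 5 * dx (dx (dx W)) p * (dx W p) ^ 2
        - 5 * (dx (dx W) p) ^ 2 * dx W p + (dx W p) ^ 5) :
    ∀ p, dt (dx W) p =
      dx (dx (dx (dx (dx (dx W))))) p
        - 5 * dx (dx (dx (dx W))) p * dx (dx W) p
        - 5 * dx (dx (dx (dx W))) p * (dx W p) ^ 2
        - 5 * (dx (dx (dx W)) p) ^ 2
        - 20 * dx (dx (dx W)) p * dx (dx W) p * dx W p
        - 5 * (dx (dx W) p) ^ 3
        + 5 * dx (dx W) p * (dx W p) ^ 4 := by
  rintro ⟨x, t⟩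
  have hWi : ContDiff ℝ ((⊤:ℕ∞) : WithTop ℕ∞) W := hW.of_le (by simp)
  set u : ℝ → ℝ := fun y => W (y, t) with hu_def
  have hu : ContDiff ℝ ((⊤:ℕ∞) : WithTop ℕ∞) u :=
    hWi.comp (contDiff_id.prodMk contDiff_const)
  have hstep : ∀ g : ℝ → ℝ, ContDiff ℝ ((⊤:ℕ∞) : WithTop ℕ∞) g →
      ContDiff ℝ ((⊤:ℕ∞) : WithTop ℕ∞) (deriv g) := fun g hg =>
    (contDiff_infty_iff_deriv.mp hg).2
  have hu1 := hstep u hu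
  have hu2 := hstep _ hu1
  have hu3 := hstep _ hu2
  have hu4 := hstep _ hu3
  have hu5 := hstep _ hu4
  have hD : ∀ g : ℝ → ℝ, ContDiff ℝ ((⊤:ℕ∞) : WithTop ℕ∞) g →
      HasDerivAt g (deriv g x) x := fun g hg =>
    ((hg.differentiable (by simp)) x).hasDerivAt
  have h1 := hD _ hu1
  have h2 := hD _ hu2
  have h3 := hD _ hu3
  have h4 := hD _ hu4
  have h5 := hD _ hu5
  have key : (fun y => dt W (y, t)) =
      (fun y => deriv (deriv (deriv (deriv (deriv u)))) y
        - 5 * deriv (deriv (deriv u)) y * deriv (deriv u) y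
        - 5 * deriv (deriv (deriv u)) y * (deriv u y) ^ 2
        - 5 * (deriv (deriv u) y) ^ 2 * deriv u y + (deriv u y) ^ 5) :=
    funext fun y => heq (y, t)
  have H := (((h5.sub ((h3.const_mul (5:ℝ)).mul h2)).sub
      ((h3.const_mul (5:ℝ)).mul (h1.pow 2))).sub
      (((h2.pow 2).const_mul (5:ℝ)).mul h1)).add (h1.pow 5)
  have hcal : dt (dx W) (x, t) = deriv (fun y => dt W (y, t)) x := by
    rw [clairaut hWi (x, t)]; rfl
  rw [hcal, key]; erw [H.deriv]
  show _ = deriv (deriv (deriv (deriv (deriv (deriv u))))) x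
        - 5 * deriv (deriv (deriv (deriv u))) x * deriv (deriv u) x
        - 5 * deriv (deriv (deriv (deriv u))) x * (deriv u x) ^ 2
        - 5 * (deriv (deriv (deriv u)) x) ^ 2
        - 20 * deriv (deriv (deriv u)) x * deriv (deriv u) x * deriv u x
        - 5 * (deriv (deriv u) x) ^ 3
        + 5 * deriv (deriv u) x * (deriv u x) ^ 4
  simp only [Pi.pow_apply]
  ring
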